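/- The exponential generating function Σ_{n≥0} P_n(x)·t^n/n! equals (x + tan(t))/(1 − x·tan(t)) for real x and t in a neighborhood of 0 where the right side is defined. -/

import Mathlib

/-! Since `tan' = 1 + tan²`, induction gives `tan⁽ⁿ⁾ = Pₙ ∘ tan`. The complex tangent is holomorphic
near `arctan x`, so its Taylor series there converges to it, and at `arctan x + t` this series is
`∑ Pₙ(x) tⁿ / n!`. The addition formula turns `tan (arctan x + t)` into `(x + tan t) / (1 - x tan t)`. -/

open Polynomial Filter Topology

noncomputable def tanDerivPoly : ℕ → Polynomial ℝ
  | 0 => X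
  | n + 1 => (1 + X ^ 2) * derivative (tanDerivPoly n)

lemma Complex.hasDerivAt_tan_one_add_tan_sq {z : ℂ} (hz : Complex.cos z ≠ 0) :
    HasDerivAt Complex.tan (1 + Complex.tan z ^ 2) z := by
  simpa [one_div, ← Complex.inv_one_add_tan_sq hz] using Complex.hasDerivAt_tan hz

lemma Complex.isOpen_setOf_cos_ne_zero : IsOpen {z : ℂ | Complex.cos z ≠ 0} :=
  isOpen_ne_fun Complex.continuous_cos continuous_const

theorem Complex.iteratedDeriv_tan_eq_aeval_tanDerivPoly (n : ℕ) {z : ℂ} (hz : Complex.cos z ≠ 0) :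
    iteratedDeriv n Complex.tan z = aeval (Complex.tan z) (tanDerivPoly n) := by
  induction n generalizing z with
  | zero => simp [tanDerivPoly]
  | succ n ih =>
    have hloc : iteratedDeriv n Complex.tan =ᶠ[𝓝 z]
        fun w => aeval (Complex.tan w) (tanDerivPoly n) :=
      eventually_of_mem (Complex.isOpen_setOf_cos_ne_zero.mem_nhds hz) fun w hw => ih hw
    have hderiv : HasDerivAt (fun w => aeval (Complex.tan w) (tanDerivPoly n))
        (aeval (Complex.tan z) (derivative (tanDerivPoly n)) * (1 + Complex.tan z ^ 2)) z :=
      ((tanDerivPoly n).hasDerivAt_aeval _).comp z (Complex.hasDerivAt_tan_one_add_tan_sq hz)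
    rw [iteratedDeriv_succ, hloc.deriv_eq, hderiv.deriv, tanDerivPoly, map_mul]
    simp [mul_comm]

theorem hasSum_tanDerivPoly_eval (x : ℝ) :
    ∀ᶠ t in 𝓝 (0 : ℝ), HasSum (fun n : ℕ => (tanDerivPoly n).eval x * t ^ n / (n.factorial : ℝ))
      (Real.tan (Real.arctan x + t)) := by
  set c : ℂ := (Real.arctan x : ℂ)
  have hc : Complex.cos c ≠ 0 := by
    rw [← Complex.ofReal_cos]
    exact Complex.ofReal_ne_zero.mpr (Real.cos_arctan_pos x).ne'
  obtain ⟨r, hr, hball⟩ :=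
    Metric.mem_nhds_iff.mp (Complex.isOpen_setOf_cos_ne_zero.mem_nhds hc)
  have hdiff : DifferentiableOn ℂ Complex.tan (Metric.ball c r) := fun w hw =>
    (Complex.differentiableAt_tan.mpr (hball hw)).differentiableWithinAt
  have hnear : Tendsto (fun t : ℝ => c + t) (𝓝 0) (𝓝 c) := by
    have hcont : Continuous fun t : ℝ => c + t := by fun_prop
    exact hcont.tendsto' 0 c (by rw [Complex.ofReal_zero, add_zero])
  have hcoeff (n : ℕ) : iteratedDeriv n Complex.tan c = (((tanDerivPoly n).eval x : ℝ) : ℂ) := by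
    have htan : Complex.tan c = (x : ℂ) := by
      rw [← Complex.ofReal_tan, Real.tan_arctan]
    rw [Complex.iteratedDeriv_tan_eq_aeval_tanDerivPoly n hc, htan]
    exact aeval_algebraMap_apply_eq_algebraMap_eval (A := ℂ) x (tanDerivPoly n)
  filter_upwards [hnear (Metric.ball_mem_nhds c hr)] with t ht
  have htaylor := Complex.hasSum_taylorSeries_on_ball hdiff ht
  simp only [hcoeff, add_sub_cancel_left, smul_eq_mul] at htaylor
  rw [← Complex.hasSum_ofReal, Complex.ofReal_tan, Complex.ofReal_add]
  refine htaylor.congr_fun fun n => ?_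
  push_cast
  ring

/-- No hypothesis on `cos (x + y)` is needed: when it vanishes so does `1 - tan x * tan y`, and both
sides are `0` by the junk value of division. -/
lemma Real.tan_add_of_cos_ne_zero {x y : ℝ} (hx : Real.cos x ≠ 0) (hy : Real.cos y ≠ 0) :
    Real.tan (x + y) = (Real.tan x + Real.tan y) / (1 - Real.tan x * Real.tan y) := by
  simp only [Real.tan_eq_sin_div_cos, Real.sin_add, Real.cos_add]
  rw [← div_div_div_cancel_right₀ (mul_ne_zero hx hy)]
  congr 1 <;> field_simp

theorem tanDerivPoly_egf (x : ℝ) :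
    ∀ᶠ t in 𝓝 (0 : ℝ),
      ∑' n : ℕ, (tanDerivPoly n).eval x * t ^ n / (n.factorial : ℝ) =
        (x + Real.tan t) / (1 - x * Real.tan t) := by
  have hcos : ∀ᶠ t in 𝓝 (0 : ℝ), Real.cos t ≠ 0 :=
    Real.continuous_cos.continuousAt.eventually_ne (by simp)
  filter_upwards [hasSum_tanDerivPoly_eval x, hcos] with t hsum ht
  rw [hsum.tsum_eq, Real.tan_add_of_cos_ne_zero (Real.cos_arctan_pos x).ne' ht, Real.tan_arctan]
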